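/- arXiv:2505.14908 — 2 statements merged into one kernel-verified Lean document; each statement's English description precedes it below -/
import Mathlib

section
/- Fix a tree T with bipartition {A,B}, |A| = l+1 ≤ |B|, and δ = min degree over A, with δ ≥ 2. For n sufficiently large, spex(n,T) ≥ f(δ−2, n), where f(d,n) = ( l+d−1 + √((l+d−1)² + 4(nl + d − ld − l²)) ) / 2. Concretely: if H₂ is a graph on n−l vertices with maximum degree at most δ−1 such that at most one vertex has degree δ−1 (e.g., an almost-(δ−2)-regular graph), then K_l ∨ H₂ is T-free and λ(K_l ∨ H₂) ≥ f(δ−2, n). -/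
open scoped Classical

/-- The adjacency spectral radius (largest adjacency eigenvalue) of a finite simple graph. -/
noncomputable def specRad {V : Type*} [Fintype V] (G : SimpleGraph V) : ℝ :=
  sSup {μ : ℝ | Module.End.HasEigenvalue (Matrix.toLin' (G.adjMatrix ℝ)) μ}

/-- `G` contains a copy of `T` (a subgraph isomorphic to `T`). -/
def ContainsCopy {V W : Type*} (T : SimpleGraph V) (G : SimpleGraph W) : Prop :=
  ∃ f : V → W, Function.Injective f ∧ ∀ ⦃a b⦄, T.Adj a b → G.Adj (f a) (f b)

/-- The spectral extremal number: the supremum of spectral radii of `T`-free graphs on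
`n` vertices. -/
noncomputable def spex (n : ℕ) {W : Type*} (T : SimpleGraph W) : ℝ :=
  sSup {r : ℝ | ∃ G : SimpleGraph (Fin n), ¬ ContainsCopy T G ∧ specRad G = r}

/-- The join `G ∨ H` of two graphs. -/
def graphJoin {α β : Type*} (G : SimpleGraph α) (H : SimpleGraph β) : SimpleGraph (α ⊕ β) where
  Adj x y :=
    match x, y with
    | Sum.inl a, Sum.inl b => G.Adj a b
    | Sum.inr a, Sum.inr b => H.Adj a b
    | Sum.inl _, Sum.inr _ => True
    | Sum.inr _, Sum.inl _ => True
  symm := by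
    constructor
    rintro (a|a) (b|b) h
    · exact G.adj_symm h
    · trivial
    · trivial
    · exact H.adj_symm h
  loopless := by
    constructor
    rintro (a|a) h
    · exact G.irrefl h
    · exact H.irrefl h

/-- `f(d,n) = ( l+d−1 + √((l+d−1)² + 4(nl + d − ld − l²)) ) / 2`. -/
noncomputable def fdn (l d n : ℝ) : ℝ :=
  (l + d - 1 + Real.sqrt ((l + d - 1) ^ 2 + 4 * (n * l + d - l * d - l ^ 2))) / 2

/-!
An embedding of `T` into `K_l ∨ H` puts a set `L` of at most `l` vertices of `T` on the `K_l` side.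
Let `A' = A \ L` and `B' = L \ A`; then `|A'| > |B'|` because `|A| = l + 1`. A vertex of `A'` has at
most `δ - 1` neighbours on the `H` side, hence at least one neighbour in `B'` (the class `A` is
independent), and at least two unless its image is the unique vertex of degree `δ - 1` of `H`. So
the forest of edges of `T` between `A'` and `B'` has at least `2|A'| - 1` and at most
`|A'| + |B'| - 1` edges, a contradiction.

For the spectral bound, with `m = n - l` and `μ = f(d, n)`, the vector equal to `m` on `K_l` and to
`μ + 1 - l` on `H` has Rayleigh quotient at least `μ` as soon as `H` has minimum degree `d`.
A graph `H` on `ℤ/m` with all degrees in `{d, d + 1}` and at most one vertex of degree `d + 1` is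
the circulant graph with jumps `1, …, ⌊d/2⌋`, together with the edges `{u, u + ⌊m/2⌋}` for
`u + ⌊m/2⌋ < m` when `d` is odd.
-/

open Finset Matrix Module.End SimpleGraph

theorem LinearMap.IsSymmetric.exists_hasEigenvalue_ge {E : Type*} [NormedAddCommGroup E]
    [InnerProductSpace ℝ E] [FiniteDimensional ℝ E] {T : E →ₗ[ℝ] E} (hT : T.IsSymmetric)
    {x : E} (hx : x ≠ 0) {μ : ℝ} (h : μ * ‖x‖ ^ 2 ≤ inner ℝ (T x) x) :
    ∃ ν, HasEigenvalue T ν ∧ μ ≤ ν := by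
  have : Nontrivial E := ⟨⟨x, 0, hx⟩⟩
  refine ⟨_, hT.hasEigenvalue_iSup_of_finiteDimensional, ?_⟩
  have hbdd : BddAbove (Set.range fun y : {y : E // y ≠ 0} =>
      RCLike.re (inner ℝ (T y) (y : E)) / ‖(y : E)‖ ^ 2) := by
    refine ⟨‖LinearMap.toContinuousLinearMap T‖, ?_⟩
    rintro _ ⟨y, rfl⟩
    exact (le_abs_self _).trans ((LinearMap.toContinuousLinearMap T).rayleighQuotient_le_norm y)
  calc μ ≤ inner ℝ (T x) x / ‖x‖ ^ 2 := by rwa [le_div_iff₀ (by positivity)]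
    _ ≤ _ := le_ciSup hbdd ⟨x, hx⟩

theorem Matrix.IsHermitian.exists_hasEigenvalue_ge {ι : Type*} [Fintype ι] [DecidableEq ι]
    {A : Matrix ι ι ℝ} (hA : A.IsHermitian) {x : ι → ℝ} (hx : x ≠ 0) {μ : ℝ}
    (h : μ * (x ⬝ᵥ x) ≤ x ⬝ᵥ (A *ᵥ x)) :
    ∃ ν, HasEigenvalue (toLin' A) ν ∧ μ ≤ ν := by
  obtain ⟨ν, hν, hμν⟩ := (isSymmetric_toEuclideanLin_iff.mpr hA).exists_hasEigenvalue_ge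
    (x := WithLp.toLp 2 x) (μ := μ) (by simpa using hx) (by
      rw [← real_inner_self_eq_norm_sq]
      simp only [EuclideanSpace.inner_eq_star_dotProduct]
      simpa [dotProduct_comm] using h)
  refine ⟨ν, ?_, hμν⟩
  rw [hasEigenvalue_iff_mem_spectrum, spectrum_toLin']
  rw [← spectrum_toLpLin (p := 2), ← hasEigenvalue_iff_mem_spectrum]
  exact hν

lemma le_specRad_of_hasEigenvalue {ι : Type*} [Fintype ι] (G : SimpleGraph ι) {μ : ℝ}
    (h : HasEigenvalue (toLin' (G.adjMatrix ℝ)) μ) : μ ≤ specRad G :=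
  le_csSup (finite_hasEigenvalue _).bddAbove h

lemma le_specRad_of_le_dotProduct {ι : Type*} [Fintype ι] (G : SimpleGraph ι) {x : ι → ℝ}
    (hx : x ≠ 0) {μ : ℝ} (h : μ * (x ⬝ᵥ x) ≤ x ⬝ᵥ (G.adjMatrix ℝ *ᵥ x)) :
    μ ≤ specRad G := by
  obtain ⟨ν, hν, hμν⟩ := (G.isHermitian_adjMatrix ℝ).exists_hasEigenvalue_ge hx h
  exact hμν.trans (le_specRad_of_hasEigenvalue G hν)

lemma specRad_eq_of_iso {α β : Type*} [Fintype α] [Fintype β] {G : SimpleGraph α}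
    {G' : SimpleGraph β} (e : G ≃g G') : specRad G = specRad G' := by
  have hA : G'.adjMatrix ℝ = reindex e.toEquiv e.toEquiv (G.adjMatrix ℝ) := by
    ext i j
    simp only [reindex_apply, submatrix_apply, adjMatrix_apply]
    exact if_congr e.symm.map_adj_iff.symm rfl rfl
  unfold specRad
  simp_rw [hasEigenvalue_iff_mem_spectrum, spectrum_toLin', hA, ← coe_reindexAlgEquiv ℝ ℝ,
    AlgEquiv.spectrum_eq]

lemma specRad_le_spex {γ W : Type*} [Fintype γ] {T : SimpleGraph W} (G : SimpleGraph γ)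
    (hG : ¬ ContainsCopy T G) : specRad G ≤ spex (Fintype.card γ) T := by
  let e := G.overFinIso rfl
  have hfin := Set.finite_range (specRad : SimpleGraph (Fin (Fintype.card γ)) → ℝ)
  refine le_csSup (hfin.subset ?_).bddAbove ⟨_, ?_, (specRad_eq_of_iso e).symm⟩
  · rintro _ ⟨G', -, rfl⟩
    exact ⟨G', rfl⟩
  · rintro ⟨f, hf, hadj⟩
    exact hG ⟨e.symm ∘ f, e.symm.injective.comp hf, fun _ _ h => e.symm.map_adj_iff.2 (hadj h)⟩

section graphJoin

variable {α β : Type*} {G : SimpleGraph α} {H : SimpleGraph β}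

@[simp] lemma graphJoin_adj_inl_inl {a a' : α} :
    (graphJoin G H).Adj (.inl a) (.inl a') ↔ G.Adj a a' := Iff.rfl

@[simp] lemma graphJoin_adj_inr_inr {b b' : β} :
    (graphJoin G H).Adj (.inr b) (.inr b') ↔ H.Adj b b' := Iff.rfl

@[simp] lemma graphJoin_adj_inl_inr {a : α} {b : β} : (graphJoin G H).Adj (.inl a) (.inr b) :=
  trivial

@[simp] lemma graphJoin_adj_inr_inl {a : α} {b : β} : (graphJoin G H).Adj (.inr b) (.inl a) :=
  trivial

end graphJoin

lemma adjMatrix_graphJoin {α β : Type*} (G : SimpleGraph α) (H : SimpleGraph β)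
    [DecidableRel G.Adj] [DecidableRel H.Adj] :
    (graphJoin G H).adjMatrix ℝ =
      fromBlocks (G.adjMatrix ℝ) (of fun _ _ => 1) (of fun _ _ => 1) (H.adjMatrix ℝ) := by
  ext (i | i) (j | j) <;> simp [adjMatrix_apply]

lemma dotProduct_adjMatrix_graphJoin_mulVec {α β : Type*} [Fintype α] [Fintype β]
    (G : SimpleGraph α) (H : SimpleGraph β) [DecidableRel G.Adj] [DecidableRel H.Adj]
    (a b : ℝ) :
    Sum.elim (fun _ => a) (fun _ => b) ⬝ᵥ
        ((graphJoin G H).adjMatrix ℝ *ᵥ Sum.elim (fun _ => a) (fun _ => b)) =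
      a ^ 2 * ∑ i, (G.degree i : ℝ) + 2 * Fintype.card α * Fintype.card β * a * b +
        b ^ 2 * ∑ j, (H.degree j : ℝ) := by
  rw [adjMatrix_graphJoin, fromBlocks_mulVec, sumElim_dotProduct_sumElim]
  have hG : (G.adjMatrix ℝ *ᵥ fun _ => a) = fun i => G.degree i * a :=
    funext fun _ => adjMatrix_mulVec_const_apply
  have hH : (H.adjMatrix ℝ *ᵥ fun _ => b) = fun j => H.degree j * b :=
    funext fun _ => adjMatrix_mulVec_const_apply
  have hα : ((of fun (_ : β) (_ : α) => (1 : ℝ)) *ᵥ fun _ => a) =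
      fun _ => Fintype.card α * a := by
    ext; simp [mulVec, dotProduct]
  have hβ : ((of fun (_ : α) (_ : β) => (1 : ℝ)) *ᵥ fun _ => b) =
      fun _ => Fintype.card β * b := by
    ext; simp [mulVec, dotProduct]
  simp only [Sum.elim_comp_inl, Sum.elim_comp_inr, hG, hH, hα, hβ, dotProduct_add]
  simp only [dotProduct, sum_const, card_univ, nsmul_eq_mul, ← mul_sum, ← sum_mul]
  ring

section fdn

variable {l d n : ℝ}

lemma fdn_discr_eq :
    (l + d - 1) ^ 2 + 4 * (n * l + d - l * d - l ^ 2) = (l - d - 1) ^ 2 + 4 * l * (n - l) := by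
  ring

lemma fdn_sq (hl : 0 ≤ l) (hln : l ≤ n) :
    fdn l d n ^ 2 = (l + d - 1) * fdn l d n + (n * l + d - l * d - l ^ 2) := by
  have hD : 0 ≤ (l + d - 1) ^ 2 + 4 * (n * l + d - l * d - l ^ 2) := by
    rw [fdn_discr_eq]
    have := mul_nonneg hl (sub_nonneg.2 hln)
    positivity
  unfold fdn
  linear_combination Real.sq_sqrt hD / 4

lemma sub_one_lt_fdn (hd : 0 ≤ d) (hln : l < n) : l - 1 < fdn l d n := by
  unfold fdn
  rw [fdn_discr_eq]
  suffices l - d - 1 < √((l - d - 1) ^ 2 + 4 * l * (n - l)) by linarith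
  rcases lt_or_ge (l - d - 1) 0 with h | h
  · exact h.trans_le (Real.sqrt_nonneg _)
  · have : 0 < l := by linarith
    apply (Real.lt_sqrt h).2
    nlinarith

end fdn

lemma SimpleGraph.sum_degrees_top {α : Type*} [Fintype α] :
    ∑ i, ((⊤ : SimpleGraph α).degree i : ℝ) = Fintype.card α * (Fintype.card α - 1) := by
  rw [← Nat.cast_sum, sum_degrees_eq_twice_card_edges,
    card_edgeFinset_top_eq_card_choose_two]
  push_cast [Nat.cast_choose_two]
  ring

theorem fdn_le_specRad_graphJoin {α β : Type*} [Fintype α] [Fintype β] [Nonempty β]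
    (H : SimpleGraph β) {d : ℕ} (hd : ∀ v, d ≤ H.degree v) :
    fdn (Fintype.card α) d (Fintype.card α + Fintype.card β) ≤
      specRad (graphJoin (⊤ : SimpleGraph α) H) := by
  set l : ℝ := (Fintype.card α : ℝ)
  set m : ℝ := (Fintype.card β : ℝ)
  set μ := fdn l d (l + m)
  have hm : 0 < m := by simp [m, Fintype.card_pos]
  have hroot : μ ^ 2 = (l + d - 1) * μ + ((l + m) * l + d - l * d - l ^ 2) :=
    fdn_sq (by positivity) (by linarith)
  have hb : 0 < μ + 1 - l := by
    linarith [sub_one_lt_fdn (d := (d : ℝ)) (l := l) (n := l + m) (by positivity) (by linarith)]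
  have hdeg : d * m ≤ ∑ v, (H.degree v : ℝ) := by
    have := card_nsmul_le_sum univ (fun v => (H.degree v : ℝ)) d
      fun v _ => by exact_mod_cast hd v
    simpa [m, mul_comm] using this
  -- `(m, μ + 1 - l)` is an eigenvector of the quotient matrix `[[l - 1, m], [l, d]]` for `μ`.
  apply le_specRad_of_le_dotProduct _ (x := Sum.elim (fun _ => m) (fun _ => μ + 1 - l))
  · intro h
    have := congr_fun h (.inr (Classical.arbitrary β))
    simp only [Sum.elim_inr, Pi.zero_apply] at this
    linarith
  · rw [dotProduct_adjMatrix_graphJoin_mulVec, sum_degrees_top]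
    have hxx : Sum.elim (fun _ : α => m) (fun _ : β => μ + 1 - l) ⬝ᵥ
        Sum.elim (fun _ => m) (fun _ => μ + 1 - l) = l * m ^ 2 + m * (μ + 1 - l) ^ 2 := by
      simp only [dotProduct, Fintype.sum_sum_type, Sum.elim_inl, Sum.elim_inr, sum_const,
        card_univ, nsmul_eq_mul]
      ring
    rw [hxx]
    calc μ * (l * m ^ 2 + m * (μ + 1 - l) ^ 2)
        = m ^ 2 * (l * (l - 1)) + 2 * l * m * m * (μ + 1 - l) + (μ + 1 - l) ^ 2 * (d * m) := by
          linear_combination (m * (μ + 1 - l)) * hroot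
      _ ≤ _ := by gcongr

namespace SimpleGraph

variable {V : Type*} [Fintype V] {G : SimpleGraph V}

theorem IsAcyclic.card_edgeFinset_lt_card [Nonempty V] [Fintype G.edgeSet] (h : G.IsAcyclic) :
    #G.edgeFinset < Fintype.card V := by
  obtain ⟨F, hGF, -, hF⟩ := connected_top.exists_isTree_le_of_le_of_isAcyclic le_top h
  have := hF.card_edgeFinset
  have := card_le_card (edgeFinset_mono hGF)
  omega

theorem IsAcyclic.card_edgeFinset_lt_of_support_subset [DecidableRel G.Adj] (h : G.IsAcyclic)
    {s : Finset V} (hs : G.support ⊆ s) (hne : s.Nonempty) : #G.edgeFinset < #s := by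
  have : Nonempty s := hne.to_subtype
  rw [← card_edgeFinset_induce_of_support_subset hs]
  convert (h.induce s).card_edgeFinset_lt_card
  simp

end SimpleGraph

lemma Finset.two_mul_card_le_sum_add_one {ι : Type*} {s : Finset ι} {g : ι → ℕ}
    (hpos : ∀ i ∈ s, 1 ≤ g i) (hsmall : #{i ∈ s | g i < 2} ≤ 1) :
    2 * #s ≤ ∑ i ∈ s, g i + 1 :=
  calc 2 * #s = ∑ i ∈ s, 2 := by rw [sum_const, smul_eq_mul, mul_comm]
    _ ≤ ∑ i ∈ s, (g i + if g i < 2 then 1 else 0) :=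
      sum_le_sum fun i hi => by have := hpos i hi; split_ifs <;> omega
    _ = ∑ i ∈ s, g i + #{i ∈ s | g i < 2} := by rw [sum_add_distrib, card_filter]
    _ ≤ ∑ i ∈ s, g i + 1 := by gcongr

section Embedding

variable {V α β : Type*} [Fintype V] {T : SimpleGraph V} {G : SimpleGraph α}
  {H : SimpleGraph β} {f : V → α ⊕ β}

def leftPreimage (f : V → α ⊕ β) : Finset V := {v | (f v).isLeft}

lemma card_leftPreimage_le [Fintype α] (hf : Function.Injective f) :
    #(leftPreimage f) ≤ Fintype.card α :=
  calc #(leftPreimage f) = #((leftPreimage f).map ⟨f, hf⟩) := (card_map _).symm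
    _ ≤ #(univ.map (.inl : α ↪ α ⊕ β)) := card_le_card fun y => by
      simp only [leftPreimage, mem_map, Function.Embedding.coeFn_mk, mem_filter, mem_univ,
        true_and]
      rintro ⟨v, hv, rfl⟩
      obtain ⟨a, ha⟩ := Sum.isLeft_iff.1 hv
      exact ⟨a, ha.symm⟩
    _ = Fintype.card α := by simp

variable [Fintype β]

lemma card_neighborFinset_filter_isRight_le (hf : Function.Injective f)
    (hadj : ∀ ⦃a b⦄, T.Adj a b → (graphJoin G H).Adj (f a) (f b)) {v : V} {x : β}
    (hx : f v = .inr x) : #{w ∈ T.neighborFinset v | (f w).isRight} ≤ H.degree x := by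
  refine (card_le_card_of_injOn f (t := (H.neighborFinset x).map .inr) (fun w hw => ?_)
    hf.injOn).trans_eq (by rw [card_map, H.card_neighborFinset_eq_degree])
  obtain ⟨hvw, hw⟩ := mem_filter.1 (mem_coe.1 hw)
  obtain ⟨y, hy⟩ := Sum.isRight_iff.1 hw
  have := hadj (T.mem_neighborFinset _ _ |>.1 hvw)
  rw [hx, hy] at this
  simpa [hy] using this

lemma degree_le_degree_between_add_degree (hf : Function.Injective f)
    (hadj : ∀ ⦃a b⦄, T.Adj a b → (graphJoin G H).Adj (f a) (f b)) {A : Finset V}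
    (hA : ∀ ⦃u v⦄, T.Adj u v → u ∈ A → v ∉ A) {a : V} (ha : a ∈ A) {x : β}
    (hx : f a = .inr x) :
    T.degree a ≤
      (T.between ↑(A \ leftPreimage f) ↑(leftPreimage f \ A)).degree a + H.degree x := by
  set F := T.between ↑(A \ leftPreimage f) ↑(leftPreimage f \ A)
  have hsub : T.neighborFinset a ⊆
      F.neighborFinset a ∪ {w ∈ T.neighborFinset a | (f w).isRight} := by
    intro w hw
    rw [mem_neighborFinset] at hw
    by_cases hwL : (f w).isLeft
    · refine mem_union_left _ ((F.mem_neighborFinset _ _).2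
        (between_adj.2 ⟨hw, .inl ⟨?_, ?_⟩⟩))
      · simp [leftPreimage, ha, hx]
      · simp [leftPreimage, hwL, hA hw ha]
    · exact mem_union_right _
        (mem_filter.2 ⟨(T.mem_neighborFinset _ _).2 hw, by simpa using hwL⟩)
  calc T.degree a = #(T.neighborFinset a) := (T.card_neighborFinset_eq_degree a).symm
    _ ≤ #(F.neighborFinset a) + #{w ∈ T.neighborFinset a | (f w).isRight} :=
      (card_le_card hsub).trans (card_union_le _ _)
    _ ≤ F.degree a + H.degree x := by
      rw [F.card_neighborFinset_eq_degree]
      exact Nat.add_le_add_left (card_neighborFinset_filter_isRight_le hf hadj hx) _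

end Embedding

theorem not_containsCopy_graphJoin {V α β : Type*} [Fintype V] [Fintype α] [Fintype β]
    {T : SimpleGraph V} (hT : T.IsAcyclic) {A : Finset V}
    (hA : ∀ ⦃u v⦄, T.Adj u v → u ∈ A → v ∉ A) (hcard : Fintype.card α < #A) {k : ℕ}
    (hdeg : ∀ a ∈ A, k < T.degree a) (G : SimpleGraph α) {H : SimpleGraph β}
    (hmax : ∀ v, H.degree v ≤ k)
    (huniq : ∀ u v, H.degree u = k → H.degree v = k → u = v) :
    ¬ ContainsCopy T (graphJoin G H) := by
  rintro ⟨f, hf, hadj⟩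
  set L := leftPreimage f
  set A' := A \ L
  set F := T.between ↑A' ↑(L \ A)
  have hlocal : ∀ a ∈ A', ∃ x, f a = .inr x ∧ k < F.degree a + H.degree x := by
    intro a ha
    obtain ⟨haA, haL⟩ := mem_sdiff.1 ha
    obtain ⟨x, hx⟩ : ∃ x, f a = .inr x :=
      Sum.isRight_iff.1 (by simpa [L, leftPreimage] using haL)
    exact ⟨x, hx, (hdeg a haA).trans_le (degree_le_degree_between_add_degree hf hadj hA haA hx)⟩
  have hpos : ∀ a ∈ A', 1 ≤ F.degree a := fun a ha => by
    obtain ⟨x, -, hx⟩ := hlocal a ha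
    have := hmax x
    omega
  have hsmall : #{a ∈ A' | F.degree a < 2} ≤ 1 := by
    refine card_le_one.2 fun a ha b hb => hf ?_
    rw [mem_filter] at ha hb
    obtain ⟨x, hax, hx⟩ := hlocal a ha.1
    obtain ⟨y, hby, hy⟩ := hlocal b hb.1
    have := hmax x
    have := hmax y
    rw [hax, hby, huniq x y (by omega) (by omega)]
  have hdisj : Disjoint (A' : Set V) ↑(L \ A) := by
    rw [disjoint_coe]
    exact disjoint_left.2 fun v hv hv' => (mem_sdiff.1 hv).2 (mem_sdiff.1 hv').1
  have hedges : ∑ a ∈ A', F.degree a = #F.edgeFinset :=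
    isBipartiteWith_sum_degrees_eq_card_edges (between_isBipartiteWith hdisj)
  have hsupp : F.support ⊆ ↑(A' ∪ (L \ A)) := by
    rintro v ⟨w, hvw⟩
    rcases (between_adj.1 hvw).2 with h | h
    exacts [mem_coe.2 (mem_union_left _ h.1), mem_coe.2 (mem_union_right _ h.1)]
  have hL : #L ≤ Fintype.card α := card_leftPreimage_le hf
  have hA'card : #A' + #(A ∩ L) = #A := card_sdiff_add_card_inter A L
  have hLcard : #(L \ A) + #(A ∩ L) = #L := inter_comm A L ▸ card_sdiff_add_card_inter L A
  have hA'ne : A'.Nonempty := card_pos.1 (by omega)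
  have hforest : #F.edgeFinset < #(A' ∪ (L \ A)) := by
    convert (hT.anti between_le).card_edgeFinset_lt_of_support_subset hsupp
      (hA'ne.mono subset_union_left)
  have := two_mul_card_le_sum_add_one hpos hsmall
  have := card_union_le A' (L \ A)
  omega

open scoped Pointwise in
lemma SimpleGraph.circulantGraph_degree {Γ : Type*} [AddCommGroup Γ] [Fintype Γ] [DecidableEq Γ]
    (s : Finset Γ) (v : Γ) [Fintype ((circulantGraph (s : Set Γ)).neighborSet v)] :
    (circulantGraph (s : Set Γ)).degree v = #((s ∪ -s).erase 0) := by
  have : (circulantGraph (s : Set Γ)).neighborFinset v =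
      ((s ∪ -s).erase 0).map (addLeftEmbedding v) := by
    ext w
    simp only [mem_neighborFinset, circulantGraph_adj, mem_map, mem_erase, mem_union, mem_neg',
      addLeftEmbedding_apply, mem_coe]
    constructor
    · rintro ⟨hvw, h⟩
      refine ⟨w - v, ⟨sub_ne_zero.2 (Ne.symm hvw), ?_⟩, add_sub_cancel v w⟩
      rw [neg_sub]
      exact h.symm
    · rintro ⟨t, ⟨ht, h⟩, rfl⟩
      refine ⟨fun h' => ht (by simpa using h'), ?_⟩
      simpa [or_comm] using h
  rw [← card_neighborFinset_eq_degree, this, card_map]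

lemma SimpleGraph.degree_sup_of_disjoint {V : Type*} {G₁ G₂ : SimpleGraph V}
    (h : Disjoint G₁ G₂) (v : V) [Fintype ((G₁ ⊔ G₂).neighborSet v)]
    [Fintype (G₁.neighborSet v)] [Fintype (G₂.neighborSet v)] :
    (G₁ ⊔ G₂).degree v = G₁.degree v + G₂.degree v := by
  simp only [← card_neighborFinset_eq_degree, neighborFinset_sup_of_disjoint v h, card_disjUnion]

section Construction

variable {m : ℕ} [NeZero m]

lemma ZMod.card_filter_val_eq (c : ℕ) : #{x : ZMod m | x.val = c} = if c < m then 1 else 0 := by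
  split_ifs with hc
  · rw [card_eq_one]
    refine ⟨c, eq_singleton_iff_unique_mem.2
      ⟨by simp [ZMod.val_cast_of_lt hc], fun x hx => ?_⟩⟩
    rw [← (mem_filter.1 hx).2, ZMod.natCast_zmod_val]
  · rw [card_eq_zero, filter_eq_empty_iff]
    intro x _ hx
    exact hc (hx ▸ x.val_lt)

def cycleJumps (m k : ℕ) : Finset (ZMod m) := (Icc 1 k).image (↑)

variable {k : ℕ}

lemma mem_cycleJumps (hk : k < m) {x : ZMod m} :
    x ∈ cycleJumps m k ↔ 1 ≤ x.val ∧ x.val ≤ k := by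
  simp only [cycleJumps, mem_image, mem_Icc]
  constructor
  · rintro ⟨i, hi, rfl⟩
    rwa [ZMod.val_cast_of_lt (by omega)]
  · exact fun hx => ⟨x.val, hx, ZMod.natCast_zmod_val x⟩

open scoped Pointwise in
lemma card_cycleJumps_union_neg (hk : 2 * k < m) :
    #((cycleJumps m k ∪ -cycleJumps m k).erase 0) = 2 * k := by
  have hval : ∀ x : ZMod m, x ∈ -cycleJumps m k ↔ x ≠ 0 ∧ m - k ≤ x.val := by
    intro x
    rw [mem_neg', mem_cycleJumps (by omega)]
    by_cases hx : x = 0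
    · simp [hx]
    · have := x.val_lt
      have := (ZMod.val_ne_zero x).2 hx
      rw [ZMod.neg_val, if_neg hx]
      exact ⟨fun h => ⟨hx, by omega⟩, fun ⟨_, h⟩ => by omega⟩
  have hcard : #(cycleJumps m k) = k := by
    rw [cycleJumps, card_image_of_injOn, Nat.card_Icc, Nat.add_sub_cancel]
    intro i hi j hj hij
    simp only [coe_Icc, Set.mem_Icc] at hi hj
    simpa [ZMod.val_cast_of_lt (show i < m by omega), ZMod.val_cast_of_lt (show j < m by omega)]
      using congrArg ZMod.val hij
  rw [erase_eq_of_notMem, card_union_of_disjoint, card_neg, hcard, two_mul]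
  · exact disjoint_left.2 fun x h h' => by
      rw [mem_cycleJumps (by omega)] at h
      rw [hval] at h'
      omega
  · rw [mem_union, mem_cycleJumps (by omega), hval]
    simp

lemma degree_cycleJumps (hk : 2 * k < m) (v : ZMod m)
    [Fintype ((circulantGraph (cycleJumps m k : Set (ZMod m))).neighborSet v)] :
    (circulantGraph (cycleJumps m k : Set (ZMod m))).degree v = 2 * k := by
  rw [circulantGraph_degree, card_cycleJumps_union_neg hk]

-- A perfect matching for even `m`; for odd `m`, `⌊m/2⌋` is matched to both `0` and `m - 1`.
def halfShiftGraph (m : ℕ) : SimpleGraph (ZMod m) :=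
  fromRel fun u w => u.val + m / 2 = w.val

lemma halfShiftGraph_degree (hm : 2 ≤ m) (v : ZMod m)
    [Fintype ((halfShiftGraph m).neighborSet v)] :
    (halfShiftGraph m).degree v =
      (if v.val + m / 2 < m then 1 else 0) + (if m / 2 ≤ v.val then 1 else 0) := by
  have hN : (halfShiftGraph m).neighborFinset v =
      univ.filter (fun w : ZMod m => w.val = v.val + m / 2) ∪
        univ.filter (fun w : ZMod m => w.val + m / 2 = v.val) := by
    ext w
    rw [mem_neighborFinset]
    simp only [halfShiftGraph, fromRel_adj, mem_union, mem_filter, mem_univ, true_and]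
    refine ⟨fun ⟨_, h⟩ => by omega, fun h => ⟨fun hvw => ?_, by omega⟩⟩
    subst hvw
    omega
  have hdown : #{w : ZMod m | w.val + m / 2 = v.val} = if m / 2 ≤ v.val then 1 else 0 := by
    split_ifs with h
    · rw [filter_congr fun w _ => show w.val + m / 2 = v.val ↔ w.val = v.val - m / 2 by omega,
        ZMod.card_filter_val_eq, if_pos (by have := v.val_lt; omega)]
    · exact card_eq_zero.2 (filter_eq_empty_iff.2 fun w _ => by omega)
  rw [← card_neighborFinset_eq_degree, hN, card_union_of_disjoint, hdown,
    ZMod.card_filter_val_eq]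
  exact disjoint_filter.2 fun w _ h => by omega

lemma disjoint_circulantGraph_halfShiftGraph (hk : 2 * k + 2 ≤ m) :
    Disjoint (circulantGraph (cycleJumps m k : Set (ZMod m))) (halfShiftGraph m) := by
  have key : ∀ a b : ZMod m, a.val + m / 2 = b.val →
      a - b ∉ cycleJumps m k ∧ b - a ∉ cycleJumps m k := by
    intro a b h
    have hba : (b - a).val = m / 2 := by rw [ZMod.val_sub (by omega)]; omega
    have hab : (a - b).val = m - m / 2 := by
      rw [← neg_sub, ZMod.neg_val, if_neg fun h0 => by simp [h0] at hba; omega, hba]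
    simp only [mem_cycleJumps (show k < m by omega), hab, hba]
    omega
  rw [SimpleGraph.disjoint_left]
  rintro u w ⟨-, hc⟩ ⟨-, h | h⟩
  · have := key u w h
    simp only [mem_coe] at hc
    tauto
  · have := key w u h
    simp only [mem_coe] at hc
    tauto

theorem exists_almostRegular (d : ℕ) (hm : d + 2 ≤ m) :
    ∃ H : SimpleGraph (ZMod m), (∀ v, d ≤ H.degree v ∧ H.degree v ≤ d + 1) ∧
      ∀ u v, H.degree u = d + 1 → H.degree v = d + 1 → u = v := by
  obtain ⟨k, rfl | rfl⟩ := Nat.even_or_odd' d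
  · refine ⟨circulantGraph (cycleJumps m k : Set (ZMod m)), fun v => ?_,
      fun u v hu _ => ?_⟩ <;>
      simp only [degree_cycleJumps (show 2 * k < m by omega)] at * <;> omega
  · have hdeg (v : ZMod m) [Fintype ((circulantGraph (cycleJumps m k : Set (ZMod m)) ⊔
        halfShiftGraph m).neighborSet v)] :
        (circulantGraph (cycleJumps m k : Set (ZMod m)) ⊔ halfShiftGraph m).degree v =
          2 * k + ((if v.val + m / 2 < m then 1 else 0) + (if m / 2 ≤ v.val then 1 else 0)) := by
      rw [degree_sup_of_disjoint (disjoint_circulantGraph_halfShiftGraph (by omega)),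
        degree_cycleJumps (by omega), halfShiftGraph_degree (by omega)]
    refine ⟨circulantGraph (cycleJumps m k : Set (ZMod m)) ⊔ halfShiftGraph m,
      fun v => ?_, fun u v hu hv => ZMod.val_injective m ?_⟩
    · have := v.val_lt
      simp only [hdeg]
      split_ifs <;> omega
    · simp only [hdeg] at hu hv
      have := u.val_lt
      have := v.val_lt
      split_ifs at hu hv <;> omega

end Construction

theorem spex_lower_bound_general {V : Type*} [Fintype V]
    (T : SimpleGraph V) (hT : T.IsTree) (l δ : ℕ)
    (A : Finset V) (hbip : ∀ ⦃u v⦄, T.Adj u v → (u ∈ A ↔ v ∉ A))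
    (hA : A.card = l + 1)
    (hδmin : ∀ v ∈ A, δ ≤ T.degree v)
    (hδ2 : 2 ≤ δ) :
    ∃ N : ℕ, ∀ n : ℕ, N ≤ n →
      (∀ H₂ : SimpleGraph (Fin (n - l)),
        (∀ v, H₂.degree v ≤ δ - 1) →
        (∀ u v, H₂.degree u = δ - 1 → H₂.degree v = δ - 1 → u = v) →
          ¬ ContainsCopy T (graphJoin (⊤ : SimpleGraph (Fin l)) H₂) ∧
          (H₂.IsRegularOfDegree (δ - 2) →
            fdn l ((δ : ℝ) - 2) n ≤ specRad (graphJoin (⊤ : SimpleGraph (Fin l)) H₂))) ∧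
      fdn l ((δ : ℝ) - 2) n ≤ spex n T := by
  have hfree {β : Type} [Fintype β] (H : SimpleGraph β) (hmax : ∀ v, H.degree v ≤ δ - 1)
      (huniq : ∀ u v, H.degree u = δ - 1 → H.degree v = δ - 1 → u = v) :
      ¬ ContainsCopy T (graphJoin (⊤ : SimpleGraph (Fin l)) H) :=
    not_containsCopy_graphJoin hT.isAcyclic (fun _ _ h hu => (hbip h).1 hu) (by simp [hA])
      (fun a ha => by have := hδmin a ha; omega) ⊤ hmax huniq
  refine ⟨l + δ, fun n hn => ?_⟩
  have : NeZero (n - l) := ⟨by omega⟩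
  have hspec {β : Type} [Fintype β] [Nonempty β] (H : SimpleGraph β)
      (hcard : Fintype.card β = n - l) (hd : ∀ v, δ - 2 ≤ H.degree v) :
      fdn l ((δ : ℝ) - 2) n ≤ specRad (graphJoin (⊤ : SimpleGraph (Fin l)) H) := by
    have := fdn_le_specRad_graphJoin (α := Fin l) H hd
    rwa [Fintype.card_fin, hcard, Nat.cast_sub hδ2, Nat.cast_sub (by omega : l ≤ n),
      add_sub_cancel, Nat.cast_ofNat] at this
  refine ⟨fun H₂ hmax huniq => ⟨hfree H₂ hmax huniq,
    fun hreg => hspec H₂ (Fintype.card_fin _) fun v => (hreg v).ge⟩, ?_⟩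
  obtain ⟨H, hdeg, huniq⟩ := exists_almostRegular (m := n - l) (δ - 2) (by omega)
  have hle := specRad_le_spex _ (hfree H (fun v => by have := hdeg v; omega)
    fun u v hu hv => huniq u v (by omega) (by omega))
  rw [Fintype.card_sum, Fintype.card_fin, ZMod.card, Nat.add_sub_cancel' (by omega)] at hle
  exact (hspec H (ZMod.card _) fun v => (hdeg v).1).trans hle

/-- Fix a tree `T` with bipartition `{A,B}`, `|A| = l+1 ≤ |B|`, and `δ ≥ 2` the minimum
degree over `A`.  For all sufficiently large `n`: any graph `K_l ∨ H₂` where `H₂` has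
`n − l` vertices, maximum degree at most `δ−1`, and at most one vertex of degree `δ−1`
is `T`-free; if moreover `H₂` is `(δ−2)`-regular then its spectral radius is at least
`f(δ−2, n)`; and consequently `spex(n, T) ≥ f(δ−2, n)`. -/
theorem spex_lower_bound {V : Type*} [Fintype V]
    (T : SimpleGraph V) (hT : T.IsTree) (l δ : ℕ)
    (A : Finset V) (hbip : ∀ ⦃u v⦄, T.Adj u v → (u ∈ A ↔ v ∉ A))
    (hA : A.card = l + 1) (hAB : A.card ≤ Aᶜ.card)
    (hδmin : ∀ v ∈ A, δ ≤ T.degree v) (hδmem : ∃ v ∈ A, T.degree v = δ)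
    (hδ2 : 2 ≤ δ) :
    ∃ N : ℕ, ∀ n : ℕ, N ≤ n →
      (∀ H₂ : SimpleGraph (Fin (n - l)),
        (∀ v, H₂.degree v ≤ δ - 1) →
        (∀ u v, H₂.degree u = δ - 1 → H₂.degree v = δ - 1 → u = v) →
          ¬ ContainsCopy T (graphJoin (⊤ : SimpleGraph (Fin l)) H₂) ∧
          (H₂.IsRegularOfDegree (δ - 2) →
            fdn l ((δ : ℝ) - 2) n ≤ specRad (graphJoin (⊤ : SimpleGraph (Fin l)) H₂))) ∧
      fdn l ((δ : ℝ) - 2) n ≤ spex n T :=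
  spex_lower_bound_general T hT l δ A hbip hA hδmin hδ2
end

section
/- Let H = K_l ∨ H₂ where H₂ is a graph on n−l vertices with maximum degree d and at most c vertices of degree exactly d, where d ≥ 1, l ≥ 1 and n is sufficiently large (so that √(l(n−l)) > d). Then λ(H) ≤ f(d−1, n) + 2c/n, where f(d−1,n) is the largest root of x² − (l+d−2)x + (l−1)(d−1) − l(n−l) = 0. -/
/-!
Let `x` be an eigenvector of `K_l ∨ H₂` for an eigenvalue `μ > d` and `y = |x|`, so that
`μ y ≤ A y` entrywise. Let `S`, `T` be the sums of `y` over `K_l` and over `H₂`, and `m` its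
maximum on `H₂`. Summing the rows of `A` over `K_l` and over `H₂`, and reading the row of a
vertex where `m` is attained, gives `(μ - l + 1) S ≤ l T`, `(μ - d + 1) T ≤ (n - l) S + c m`
(only the at most `c` vertices of degree `d` exceed degree `d - 1`, and each contributes at most
`m`), and `(μ - d) m ≤ S`. Eliminating `S, T, m` leaves
`(μ - l + 1)(μ - d + 1)(μ - d) ≤ l ((n - l)(μ - d) + c)`. Writing `μ = f(d-1,n) + t` and `s` for
the distance between the two roots of the defining quadratic, this reads `t (t + s) (μ - d) ≤ l c`,
and `t ≤ 2c/n` follows because `l n³ ≤ (2 + s n)(4 + (s + l - d - 2) n)` whenever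
`d² < l (n - l)`.
-/

open scoped Classical

open Matrix

namespace SimpleGraph

variable {V : Type*} [Fintype V]

theorem abs_mul_abs_le_sum_neighborFinset (G : SimpleGraph V) {μ : ℝ} {x : V → ℝ}
    (hx : G.adjMatrix ℝ *ᵥ x = μ • x) (v : V) :
    |μ| * |x v| ≤ ∑ w ∈ G.neighborFinset v, |x w| := by
  rw [← abs_mul, ← smul_eq_mul, ← Pi.smul_apply, ← hx, adjMatrix_mulVec_apply]
  exact Finset.abs_sum_le_sum_abs _ _

theorem sum_sum_neighborFinset (G : SimpleGraph V) (y : V → ℝ) :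
    ∑ v, ∑ w ∈ G.neighborFinset v, y w = ∑ w, (G.degree w : ℝ) * y w := by
  have h := dotProduct_mulVec (fun _ => (1 : ℝ)) (G.adjMatrix ℝ) y
  simp only [adjMatrix_mulVec_apply, adjMatrix_vecMul_apply, Finset.sum_const,
    nsmul_eq_mul, mul_one, card_neighborFinset_eq_degree, dotProduct, one_mul] at h
  exact h

theorem sum_degree_mul_le {H : SimpleGraph V} {y : V → ℝ} {d c : ℕ} {m : ℝ}
    (hy : ∀ v, 0 ≤ y v) (hm : 0 ≤ m) (hym : ∀ v, y v ≤ m) (hmax : ∀ v, H.degree v ≤ d)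
    (hc : (Finset.univ.filter (fun v => H.degree v = d)).card ≤ c) :
    ∑ v, (H.degree v : ℝ) * y v ≤ ((d : ℝ) - 1) * ∑ v, y v + c * m := by
  have hpt : ∀ v,
      (H.degree v : ℝ) * y v ≤ ((d : ℝ) - 1) * y v + if H.degree v = d then m else 0 := by
    intro v
    split_ifs with h
    · rw [h]; linarith [hym v]
    · have : (H.degree v : ℝ) ≤ d - 1 := by
        have := hmax v; rw [le_sub_iff_add_le]; exact_mod_cast (by omega : H.degree v + 1 ≤ d)
      nlinarith [hy v]
  calc ∑ v, (H.degree v : ℝ) * y v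
        ≤ ∑ v, (((d : ℝ) - 1) * y v + if H.degree v = d then m else 0) :=
        Finset.sum_le_sum fun v _ => hpt v
    _ = ((d : ℝ) - 1) * ∑ v, y v + (Finset.univ.filter (fun v => H.degree v = d)).card * m := by
        rw [Finset.sum_add_distrib, Finset.mul_sum, Finset.sum_ite, Finset.sum_const_zero,
          add_zero, Finset.sum_const, nsmul_eq_mul]
    _ ≤ ((d : ℝ) - 1) * ∑ v, y v + c * m := by gcongr

variable {α β : Type*} [Fintype α] [Fintype β] (G : SimpleGraph α) (H : SimpleGraph β)

theorem neighborFinset_graphJoin_inl (a : α) :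
    (graphJoin G H).neighborFinset (.inl a) = (G.neighborFinset a).disjSum Finset.univ := by
  ext (b | b) <;> simp only [mem_neighborFinset, Finset.inl_mem_disjSum, Finset.inr_mem_disjSum,
    Finset.mem_univ] <;> exact Iff.rfl

theorem neighborFinset_graphJoin_inr (b : β) :
    (graphJoin G H).neighborFinset (.inr b) = Finset.univ.disjSum (H.neighborFinset b) := by
  ext (a | a) <;> simp only [mem_neighborFinset, Finset.inl_mem_disjSum, Finset.inr_mem_disjSum,
    Finset.mem_univ] <;> exact Iff.rfl

theorem sum_neighborFinset_graphJoin_inr (y : α ⊕ β → ℝ) (b : β) :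
    ∑ w ∈ (graphJoin G H).neighborFinset (.inr b), y w
      = ∑ a, y (.inl a) + ∑ u ∈ H.neighborFinset b, y (.inr u) := by
  rw [neighborFinset_graphJoin_inr, Finset.sum_disjSum]

theorem sum_neighborFinset_graphJoin_top_inl {l : ℕ} (y : Fin l ⊕ β → ℝ) (a : Fin l) :
    ∑ w ∈ (graphJoin ⊤ H).neighborFinset (.inl a), y w
      = ∑ b, y (.inl b) - y (.inl a) + ∑ v, y (.inr v) := by
  rw [neighborFinset_graphJoin_inl, Finset.sum_disjSum, neighborFinset_eq_filter]
  simp only [top_adj, Finset.filter_ne, Finset.mem_univ, Finset.sum_erase_eq_sub]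

section JoinTop

variable {H} {l : ℕ} {μ : ℝ} {y : Fin l ⊕ β → ℝ}
  (hy : ∀ v, μ * y v ≤ ∑ w ∈ (graphJoin ⊤ H).neighborFinset v, y w)
include hy

theorem graphJoin_top_mul_sum_inl_le :
    μ * ∑ a, y (.inl a) ≤ ((l : ℝ) - 1) * ∑ a, y (.inl a) + l * ∑ v, y (.inr v) := by
  calc μ * ∑ a, y (.inl a) = ∑ a, μ * y (.inl a) := Finset.mul_sum _ _ _
    _ ≤ ∑ a : Fin l, (∑ b, y (.inl b) - y (.inl a) + ∑ v, y (.inr v)) :=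
        Finset.sum_le_sum fun a _ => (hy _).trans_eq (sum_neighborFinset_graphJoin_top_inl H y a)
    _ = ((l : ℝ) - 1) * ∑ a, y (.inl a) + l * ∑ v, y (.inr v) := by
        simp only [Finset.sum_add_distrib, Finset.sum_sub_distrib, Finset.sum_const,
          Finset.card_univ, Fintype.card_fin, nsmul_eq_mul]
        ring

theorem graphJoin_top_mul_sum_inr_le :
    μ * ∑ v, y (.inr v)
      ≤ Fintype.card β * ∑ a, y (.inl a) + ∑ v, (H.degree v : ℝ) * y (.inr v) := by
  calc μ * ∑ v, y (.inr v) = ∑ v, μ * y (.inr v) := Finset.mul_sum _ _ _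
    _ ≤ ∑ v, (∑ a, y (.inl a) + ∑ u ∈ H.neighborFinset v, y (.inr u)) :=
        Finset.sum_le_sum fun v _ => (hy _).trans_eq (sum_neighborFinset_graphJoin_inr ⊤ H y v)
    _ = Fintype.card β * ∑ a, y (.inl a) + ∑ v, (H.degree v : ℝ) * y (.inr v) := by
        rw [Finset.sum_add_distrib, sum_sum_neighborFinset H (fun u => y (.inr u)),
          Finset.sum_const, Finset.card_univ, nsmul_eq_mul]

theorem graphJoin_top_mul_inr_le_of_forall_le {v : β} (hv : ∀ u, y (.inr u) ≤ y (.inr v)) :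
    μ * y (.inr v) ≤ ∑ a, y (.inl a) + H.degree v * y (.inr v) := by
  calc μ * y (.inr v) ≤ ∑ a, y (.inl a) + ∑ u ∈ H.neighborFinset v, y (.inr u) :=
        (hy _).trans_eq (sum_neighborFinset_graphJoin_inr ⊤ H y v)
    _ ≤ ∑ a, y (.inl a) + ∑ u ∈ H.neighborFinset v, y (.inr v) := by
        gcongr with u; exact hv u
    _ = ∑ a, y (.inl a) + H.degree v * y (.inr v) := by
        rw [Finset.sum_const, card_neighborFinset_eq_degree, nsmul_eq_mul]

end JoinTop

end SimpleGraph

theorem cubic_le_of_quotient_le {l d N c μ S T m : ℝ} (hl : 0 ≤ l) (hc : 0 ≤ c) (hμ : d < μ)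
    (hS : 0 < S) (h₁ : μ * S ≤ (l - 1) * S + l * T) (h₂ : μ * T ≤ N * S + (d - 1) * T + c * m)
    (h₃ : μ * m ≤ S + d * m) :
    (μ - (l - 1)) * (μ - (d - 1)) * (μ - d) ≤ l * (N * (μ - d) + c) := by
  have hT : (μ - (d - 1)) * (μ - d) * T ≤ (N * (μ - d) + c) * S := by
    nlinarith [mul_le_mul_of_nonneg_left h₂ (sub_nonneg.2 hμ.le), mul_le_mul_of_nonneg_left h₃ hc]
  refine le_of_mul_le_mul_right ?_ hS
  calc (μ - (l - 1)) * (μ - (d - 1)) * (μ - d) * S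
        = (μ - (d - 1)) * (μ - d) * ((μ - (l - 1)) * S) := by ring
    _ ≤ (μ - (d - 1)) * (μ - d) * (l * T) :=
        mul_le_mul_of_nonneg_left (by linarith) (by nlinarith)
    _ ≤ l * (N * (μ - d) + c) * S := by nlinarith [mul_le_mul_of_nonneg_left hT hl]

open SimpleGraph in
theorem cubic_le_of_hasEigenvalue_graphJoin_top {β : Type*} [Fintype β] [Nonempty β]
    {H : SimpleGraph β} {l d c : ℕ} (hmax : ∀ v, H.degree v ≤ d)
    (hc : (Finset.univ.filter (fun v => H.degree v = d)).card ≤ c) {μ : ℝ}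
    (hμ : Module.End.HasEigenvalue (toLin' ((graphJoin (⊤ : SimpleGraph (Fin l)) H).adjMatrix ℝ)) μ)
    (hμd : (d : ℝ) < μ) :
    (μ - (l - 1)) * (μ - (d - 1)) * (μ - d) ≤ l * (Fintype.card β * (μ - d) + c) := by
  obtain ⟨x, hx⟩ := hμ.exists_hasEigenvector
  have hxμ : (graphJoin ⊤ H).adjMatrix ℝ *ᵥ x = μ • x := by
    rw [← toLin'_apply]; exact hx.apply_eq_smul
  have hy : ∀ v, μ * |x v| ≤ ∑ w ∈ (graphJoin ⊤ H).neighborFinset v, |x w| := fun v => by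
    simpa [abs_of_pos ((Nat.cast_nonneg d).trans_lt hμd)] using
      abs_mul_abs_le_sum_neighborFinset _ hxμ v
  obtain ⟨v₀, hv₀⟩ := Finite.exists_max fun v => |x (.inr v)|
  have h₃ : μ * |x (.inr v₀)| ≤ ∑ a, |x (.inl a)| + d * |x (.inr v₀)| :=
    (graphJoin_top_mul_inr_le_of_forall_le hy hv₀).trans (by gcongr; exact hmax v₀)
  have hS : 0 < ∑ a, |x (.inl a)| := by
    refine (Finset.sum_nonneg fun a _ => abs_nonneg _).lt_of_ne fun hS => hx.2 ?_
    have hinl := (Finset.sum_eq_zero_iff_of_nonneg fun a _ => abs_nonneg (x (.inl a))).1 hS.symm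
    have hm : |x (.inr v₀)| ≤ 0 := by nlinarith [abs_nonneg (x (.inr v₀))]
    funext w
    rcases w with a | v
    · exact abs_eq_zero.1 (hinl a (Finset.mem_univ a))
    · exact abs_nonpos_iff.1 ((hv₀ v).trans hm)
  refine cubic_le_of_quotient_le (Nat.cast_nonneg l) (Nat.cast_nonneg c) hμd hS
    (graphJoin_top_mul_sum_inl_le hy) ?_ h₃
  linarith [graphJoin_top_mul_sum_inr_le hy,
    sum_degree_mul_le (fun _ => abs_nonneg _) (abs_nonneg _) hv₀ hmax hc]

-- The coefficient of `n²` in `cube_le_of_sq_eq` below is nonnegative (with `p = l (n - l)`).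
theorem mul_sqrt_le_of_three_le_add {l d : ℕ} (hl : 1 ≤ l) (hd : 1 ≤ d) (hld : 3 ≤ l + d)
    {p s : ℝ} (hp : (d : ℝ) ^ 2 + 1 ≤ p) (hs : 0 ≤ s) (hs2 : s ^ 2 = ((l : ℝ) - d) ^ 2 + 4 * p) :
    ((d : ℝ) + 2 - l) * s ≤ 3 * p - (d : ℝ) ^ 2 - 2 * ((l : ℝ) - d) * d := by
  have hl' : (1 : ℝ) ≤ l := by exact_mod_cast hl
  have hd' : (1 : ℝ) ≤ d := by exact_mod_cast hd
  rcases (by omega : d + 2 ≤ l ∨ (l ≤ d + 1 ∧ 2 ≤ d) ∨ (l = 2 ∧ d = 1))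
    with h | ⟨h, h2⟩ | ⟨rfl, rfl⟩
  · have h' : (d : ℝ) + 2 ≤ l := by exact_mod_cast h
    have hsd : 2 * (d : ℝ) ≤ s := by nlinarith [sq_nonneg ((l : ℝ) - d)]
    nlinarith [mul_nonneg (sub_nonneg.2 h') (sub_nonneg.2 hsd)]
  · have h' : (l : ℝ) ≤ d + 1 := by exact_mod_cast h
    have h2' : (2 : ℝ) ≤ d := by exact_mod_cast h2
    nlinarith [sq_nonneg (s - 2 * ((d : ℝ) + 2 - l)),
      mul_nonneg (sub_nonneg.2 h') (sub_nonneg.2 hl'),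
      mul_nonneg (sub_nonneg.2 h2') (sub_nonneg.2 hd')]
  · push_cast at hp hs2 ⊢
    nlinarith [mul_nonneg (by linarith : (0 : ℝ) ≤ p - 2) (by linarith : (0 : ℝ) ≤ 9 * p - 4)]

theorem cube_le_of_sq_eq {l d n : ℕ} (hl : 1 ≤ l) (hd : 1 ≤ d) (hn : l < n)
    (hp : (d : ℝ) ^ 2 + 1 ≤ l * ((n : ℝ) - l)) {s : ℝ} (hs : 0 ≤ s)
    (hs2 : s ^ 2 = ((l : ℝ) - d) ^ 2 + 4 * (l * ((n : ℝ) - l))) :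
    (l : ℝ) * n ^ 3 ≤ (2 + s * n) * (4 + (s + l - d - 2) * n) := by
  have hl' : (1 : ℝ) ≤ l := by exact_mod_cast hl
  have hd' : (1 : ℝ) ≤ d := by exact_mod_cast hd
  rcases (by omega : (l = 1 ∧ d = 1) ∨ 3 ≤ l + d) with ⟨rfl, rfl⟩ | hld
  · -- Here the coefficient of `n²` is negative for `n = 3`; the lower-order terms compensate.
    simp only [Nat.cast_one] at hp hs2 ⊢
    have hn3 : (3 : ℝ) ≤ n := by linarith
    have hs' : s ≤ ((n : ℝ) + 3) / 2 := by nlinarith [sq_nonneg ((n : ℝ) - 5)]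
    nlinarith [mul_le_mul_of_nonneg_right hs' (by nlinarith : (0 : ℝ) ≤ 2 * n * (n - 3)),
      mul_nonneg (sq_nonneg (n : ℝ)) (by linarith : (0 : ℝ) ≤ n - 2)]
  · have hE := mul_sqrt_le_of_three_le_add hl hd hld hp hs hs2
    have hsd : 2 * (d : ℝ) ≤ s := by nlinarith [sq_nonneg ((l : ℝ) - d)]
    nlinarith [mul_nonneg (sq_nonneg (n : ℝ)) (sub_nonneg.2 hE)]

theorem le_two_mul_div_of_gap_le {l d n c : ℕ} (hl : 1 ≤ l) (hd : 1 ≤ d) (hn : l < n)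
    (hp : (d : ℝ) ^ 2 + 1 ≤ l * ((n : ℝ) - l)) {s : ℝ} (hs : 0 ≤ s)
    (hs2 : s ^ 2 = ((l : ℝ) - d) ^ 2 + 4 * (l * ((n : ℝ) - l))) {t : ℝ}
    (ht : t * (t + s) * (2 * t + s + l - d - 2) ≤ 2 * l * c) :
    t ≤ 2 * c / n := by
  have hn0 : (0 : ℝ) < n := by exact_mod_cast (by omega : 0 < n)
  have hsd : 2 * (d : ℝ) ≤ s := by nlinarith [sq_nonneg ((l : ℝ) - d)]
  have hk : (0 : ℝ) ≤ s + l - d - 2 := by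
    have : (1 : ℝ) ≤ l := by exact_mod_cast hl
    have : (1 : ℝ) ≤ d := by exact_mod_cast hd
    linarith
  set ε := 2 * (c : ℝ) / n with hε
  have hε0 : 0 ≤ ε := by positivity
  have hgap : 2 * l * c ≤ ε * (ε + s) * (2 * ε + s + l - d - 2) := by
    rcases Nat.eq_zero_or_pos c with rfl | hc
    · simp [hε]
    have hc1 : (1 : ℝ) ≤ c := by exact_mod_cast hc
    have hkey := cube_le_of_sq_eq hl hd hn hp hs hs2
    have hmono : (2 + s * n) * (4 + (s + l - d - 2) * n)
        ≤ (2 * c + s * n) * (4 * c + (s + l - d - 2) * n) := by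
      gcongr <;> nlinarith
    have hid : ε * (ε + s) * (2 * ε + s + l - d - 2)
        = 2 * c / n ^ 3 * ((2 * c + s * n) * (4 * c + (s + l - d - 2) * n)) := by
      rw [hε]; field_simp; ring
    rw [hid]
    calc 2 * (l : ℝ) * c = 2 * c / n ^ 3 * (l * n ^ 3) := by field_simp
      _ ≤ _ := mul_le_mul_of_nonneg_left (hkey.trans hmono) (by positivity)
  by_contra! hεt
  have : ε * (ε + s) * (2 * ε + s + l - d - 2) < t * (t + s) * (2 * t + s + l - d - 2) := by
    have h1 : ε * (ε + s) ≤ t * (t + s) := by nlinarith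
    have h2 : 0 < t * (t + s) := by nlinarith
    calc ε * (ε + s) * (2 * ε + s + l - d - 2)
        ≤ t * (t + s) * (2 * ε + s + l - d - 2) := by gcongr; linarith
      _ < t * (t + s) * (2 * t + s + l - d - 2) := by gcongr
  linarith

theorem two_mul_fdn_sub (l d n : ℝ) :
    2 * fdn l (d - 1) n - (l + d - 2) = √((l - d) ^ 2 + 4 * (l * (n - l))) := by
  rw [fdn, show (l + (d - 1) - 1) ^ 2 + 4 * (n * l + (d - 1) - l * (d - 1) - l ^ 2)
    = (l - d) ^ 2 + 4 * (l * (n - l)) by ring]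
  ring

theorem le_fdn_sub_one {l d n : ℝ} (hl : 1 ≤ l) (hd : 1 ≤ d) (hp : d ^ 2 ≤ l * (n - l)) :
    d ≤ fdn l (d - 1) n := by
  have hF := two_mul_fdn_sub l d n
  have hs : 2 * d ≤ √((l - d) ^ 2 + 4 * (l * (n - l))) :=
    (Real.le_sqrt (by linarith) (by nlinarith [sq_nonneg (l - d)])).2
      (by nlinarith [sq_nonneg (l - d)])
  linarith

theorem le_fdn_add_of_cubic_le {l d n c : ℕ} (hl : 1 ≤ l) (hd : 1 ≤ d) (hn : l < n)
    (hp : (d : ℝ) ^ 2 + 1 ≤ l * ((n : ℝ) - l)) {μ : ℝ}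
    (hμ : (μ - (l - 1)) * (μ - (d - 1)) * (μ - d) ≤ l * (((n : ℝ) - l) * (μ - d) + c)) :
    μ ≤ fdn l ((d : ℝ) - 1) n + 2 * c / n := by
  have hF := two_mul_fdn_sub l d n
  set F := fdn l ((d : ℝ) - 1) n
  set s := √(((l : ℝ) - d) ^ 2 + 4 * (l * ((n : ℝ) - l)))
  have hs : 0 ≤ s := Real.sqrt_nonneg _
  have hs2 : s ^ 2 = ((l : ℝ) - d) ^ 2 + 4 * (l * ((n : ℝ) - l)) := by
    have : (0 : ℝ) ≤ n - l := by rw [sub_nonneg]; exact_mod_cast hn.le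
    exact Real.sq_sqrt (by positivity)
  have hgap : (μ - F) * (μ - F + s) * (2 * (μ - F) + s + l - d - 2) ≤ 2 * l * c := by
    rw [← hF] at hs2 ⊢
    linear_combination 2 * hμ - (μ - d) / 2 * hs2
  linarith [le_two_mul_div_of_gap_le hl hd hn hp hs hs2 hgap]

/-- Let `H = K_l ∨ H₂` where `H₂` is a graph on `n − l` vertices with maximum degree at
most `d` and at most `c` vertices of degree exactly `d`, where `d ≥ 1`, `l ≥ 1` and `n`
is large enough that `√(l(n−l)) > d`.  Then `λ(H) ≤ f(d−1, n) + 2c/n`. -/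
theorem specRad_join_upper_bound {β : Type*} [Fintype β]
    (H₂ : SimpleGraph β) (l n d c : ℕ)
    (hβ : Fintype.card β = n - l) (hl : 1 ≤ l) (hln : l < n) (hd : 1 ≤ d)
    (hsqrt : (d : ℝ) < Real.sqrt ((l : ℝ) * ((n : ℝ) - l)))
    (hmax : ∀ v, H₂.degree v ≤ d)
    (hc : (Finset.univ.filter (fun v => H₂.degree v = d)).card ≤ c) :
    specRad (graphJoin (⊤ : SimpleGraph (Fin l)) H₂) ≤
      fdn l ((d : ℝ) - 1) n + 2 * (c : ℝ) / n := by
  have hp : (d : ℝ) ^ 2 + 1 ≤ l * ((n : ℝ) - l) := by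
    have h := (Real.lt_sqrt (Nat.cast_nonneg d)).1 hsqrt
    rw [← Nat.cast_sub hln.le] at h ⊢
    have : d ^ 2 < l * (n - l) := by exact_mod_cast h
    exact_mod_cast this
  have hdF : (d : ℝ) ≤ fdn l ((d : ℝ) - 1) n :=
    le_fdn_sub_one (by exact_mod_cast hl) (by exact_mod_cast hd) (by linarith)
  have hcn : (0 : ℝ) ≤ 2 * c / n := by positivity
  have : Nonempty β := Fintype.card_pos_iff.1 (by omega)
  have hcard : (Fintype.card β : ℝ) = n - l := by rw [hβ, Nat.cast_sub hln.le]
  refine Real.sSup_le (fun μ hμ => ?_) (by linarith [Nat.cast_nonneg (α := ℝ) d])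
  rcases le_or_gt μ d with hμd | hμd
  · linarith
  · refine le_fdn_add_of_cubic_le hl hd hln hp ?_
    simpa only [hcard] using cubic_le_of_hasEigenvalue_graphJoin_top hmax hc hμ hμd
end
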